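/- Under the cooperative KKT conditions (A y)_{S_k} = 2λ̄_k ȳ_{S_k}, ‖ȳ_{S_k}‖² = C_k, and the non-cooperative KKT conditions with multipliers λ*_k as above, the L2 efficiency satisfies e_{L2} = W(y*)/W(ȳ) ≥ (Σ_k (2λ*_k − ρ_k/2) C_k) / (Σ_k λ̄_k C_k), provided W(ȳ) > 0. -/

import Mathlib

/-!
Write `D` for the block-diagonal part of `A` with respect to the partition `P`. The
non-cooperative stationarity condition reads `D y* + ½ (A - D) y* = 2 Λ* y*`, i.e.
`A y* + D y* = 4 Λ* y*`; pairing with `y*` and using the budgets gives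
`y*ᵀ A y* = Σ_k 4 λ*_k C_k - y*ᵀ D y*`. Since `y*ᵀ D y*` is the sum of the block quadratic
forms `y*_{S_k}ᵀ A_{S_k S_k} y*_{S_k} ≤ ρ_k C_k`, this bounds `W(y*)` from below. Pairing the
cooperative condition `A ȳ = 2 Λ̄ ȳ` with `ȳ` gives `W(ȳ) = Σ_k λ̄_k C_k` exactly.
-/

open Matrix Finset

namespace Matrix

variable {ι κ R : Type*} [Fintype ι] [DecidableEq κ]

def blockDiagPart [Zero R] (P : ι → κ) (A : Matrix ι ι R) : Matrix ι ι R :=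
  fun i j => if P i = P j then A i j else 0

def blockPart [Zero R] (P : ι → κ) (k : κ) (y : ι → R) : ι → R :=
  fun i => if P i = k then y i else 0

section CommRing

variable [CommRing R] (P : ι → κ)

theorem sum_comp_mul_sq [Fintype κ] (c : κ → R) (y : ι → R) :
    ∑ i, c (P i) * y i ^ 2 = ∑ k, c k * ∑ i ∈ univ.filter (fun i => P i = k), y i ^ 2 := by
  rw [← sum_fiberwise univ P]
  refine sum_congr rfl fun k _ => ?_
  rw [mul_sum]
  exact sum_congr rfl fun i hi => by rw [(mem_filter.mp hi).2]

theorem dotProduct_mulVec_eq_of_blockwise_eigen [Fintype κ] {A : Matrix ι ι R} {y : ι → R} {c : κ → R}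
    (hstat : ∀ i, (A *ᵥ y) i = c (P i) * y i) :
    y ⬝ᵥ A *ᵥ y = ∑ k, c k * ∑ i ∈ univ.filter (fun i => P i = k), y i ^ 2 := by
  rw [← sum_comp_mul_sq, dotProduct]
  exact sum_congr rfl fun i _ => by rw [hstat]; ring

theorem blockDiagPart_mulVec_apply (A : Matrix ι ι R) (y : ι → R) (i : ι) :
    (blockDiagPart P A *ᵥ y) i = ∑ j ∈ univ.filter (fun j => P j = P i), A i j * y j := by
  simp only [mulVec, dotProduct, blockDiagPart, sum_filter, ite_mul, zero_mul, eq_comm]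

theorem mulVec_sub_blockDiagPart_mulVec_apply (A : Matrix ι ι R) (y : ι → R) (i : ι) :
    (A *ᵥ y) i - (blockDiagPart P A *ᵥ y) i =
      ∑ j ∈ univ.filter (fun j => P j ≠ P i), A i j * y j := by
  rw [blockDiagPart_mulVec_apply, mulVec, dotProduct, sub_eq_iff_eq_add',
    sum_filter_add_sum_filter_not]

theorem dotProduct_blockPart_self (k : κ) (y : ι → R) :
    blockPart P k y ⬝ᵥ blockPart P k y = ∑ i ∈ univ.filter (fun i => P i = k), y i ^ 2 := by
  rw [dotProduct, sum_filter]
  exact sum_congr rfl fun i _ => by by_cases h : P i = k <;> simp [blockPart, h, sq]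

theorem dotProduct_blockDiagPart_mulVec [Fintype κ] (A : Matrix ι ι R) (y : ι → R) :
    y ⬝ᵥ blockDiagPart P A *ᵥ y = ∑ k, blockPart P k y ⬝ᵥ A *ᵥ blockPart P k y := by
  simp only [dotProduct, mulVec, blockPart, blockDiagPart]
  rw [sum_comm]
  refine sum_congr rfl fun i _ => ?_
  simp only [ite_mul, zero_mul, sum_ite_eq, mem_univ, if_true, mul_ite, mul_zero]
  congr 1
  exact sum_congr rfl fun j _ => by split_ifs <;> simp_all

end CommRing

section OrderedField

variable [Field R] [LinearOrder R] [IsStrictOrderedRing R]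

theorem dotProduct_blockDiagPart_mulVec_le [Fintype κ] (P : ι → κ) {A : Matrix ι ι R} {rho : κ → R}
    (hrho : ∀ k, ∀ z : ι → R, (∀ i, P i ≠ k → z i = 0) → z ⬝ᵥ A *ᵥ z ≤ rho k * (z ⬝ᵥ z))
    (y : ι → R) :
    y ⬝ᵥ blockDiagPart P A *ᵥ y ≤ ∑ k, rho k * ∑ i ∈ univ.filter (fun i => P i = k), y i ^ 2 := by
  rw [dotProduct_blockDiagPart_mulVec]
  refine sum_le_sum fun k _ => ?_
  rw [← dotProduct_blockPart_self]
  exact hrho k _ fun i hi => if_neg hi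

theorem dotProduct_add_blockDiagPart_of_stationary [Fintype κ] (P : ι → κ) {A : Matrix ι ι R}
    {y : ι → R} {lam : κ → R}
    (hstat : ∀ i, (∑ j ∈ univ.filter (fun j => P j = P i), A i j * y j) +
        (1/2) * (∑ j ∈ univ.filter (fun j => P j ≠ P i), A i j * y j) = 2 * lam (P i) * y i) :
    y ⬝ᵥ A *ᵥ y + y ⬝ᵥ blockDiagPart P A *ᵥ y =
      ∑ k, 4 * lam k * ∑ i ∈ univ.filter (fun i => P i = k), y i ^ 2 := by
  rw [← sum_comp_mul_sq, ← dotProduct_add, dotProduct]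
  refine sum_congr rfl fun i _ => ?_
  have h := hstat i
  rw [← blockDiagPart_mulVec_apply, ← mulVec_sub_blockDiagPart_mulVec_apply] at h
  rw [Pi.add_apply]
  linear_combination (2 * y i) * h

theorem sum_mul_le_half_dotProduct_mulVec_of_stationary [Fintype κ] (P : ι → κ) {A : Matrix ι ι R}
    {y : ι → R} {lam rho : κ → R}
    (hstat : ∀ i, (∑ j ∈ univ.filter (fun j => P j = P i), A i j * y j) +
        (1/2) * (∑ j ∈ univ.filter (fun j => P j ≠ P i), A i j * y j) = 2 * lam (P i) * y i)
    (hrho : ∀ k, ∀ z : ι → R, (∀ i, P i ≠ k → z i = 0) → z ⬝ᵥ A *ᵥ z ≤ rho k * (z ⬝ᵥ z)) :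
    ∑ k, (2 * lam k - (1/2) * rho k) * ∑ i ∈ univ.filter (fun i => P i = k), y i ^ 2 ≤
      (1/2) * (y ⬝ᵥ A *ᵥ y) := by
  have hid := dotProduct_add_blockDiagPart_of_stationary P hstat
  have hle := dotProduct_blockDiagPart_mulVec_le P hrho y
  have hsplit : ∑ k, (2 * lam k - (1/2) * rho k) * ∑ i ∈ univ.filter (fun i => P i = k), y i ^ 2
      = (1/2) * ((∑ k, 4 * lam k * ∑ i ∈ univ.filter (fun i => P i = k), y i ^ 2) -
          ∑ k, rho k * ∑ i ∈ univ.filter (fun i => P i = k), y i ^ 2) := by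
    rw [← sum_sub_distrib, mul_sum]
    exact sum_congr rfl fun k _ => by ring
  rw [hsplit]
  linarith

end OrderedField

end Matrix

theorem stmt11_general {N M : ℕ} (A : Matrix (Fin N) (Fin N) ℝ)
    (P : Fin N → Fin M) (C lamNC lamC rho : Fin M → ℝ)
    (ystar ybar : Fin N → ℝ)
    -- non-cooperative KKT stationarity for y*
    (hstatNC : ∀ i, (∑ j ∈ Finset.univ.filter (fun j => P j = P i), A i j * ystar j) +
        (1/2) * (∑ j ∈ Finset.univ.filter (fun j => P j ≠ P i), A i j * ystar j) =
        2 * lamNC (P i) * ystar i)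
    (hbudgetNC : ∀ k, (∑ i ∈ Finset.univ.filter (fun i => P i = k), (ystar i)^2) = C k)
    -- cooperative KKT stationarity for ȳ
    (hstatC : ∀ i, (A *ᵥ ybar) i = 2 * lamC (P i) * ybar i)
    (hbudgetC : ∀ k, (∑ i ∈ Finset.univ.filter (fun i => P i = k), (ybar i)^2) = C k)
    -- spectral radius bounds for diagonal blocks
    (hrho : ∀ k, ∀ z : Fin N → ℝ, (∀ i, P i ≠ k → z i = 0) →
        z ⬝ᵥ A *ᵥ z ≤ rho k * (z ⬝ᵥ z))
    (hWbar : 0 < (1/2) * (ybar ⬝ᵥ A *ᵥ ybar)) :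
    ((1/2) * (ystar ⬝ᵥ A *ᵥ ystar)) / ((1/2) * (ybar ⬝ᵥ A *ᵥ ybar)) ≥
      (∑ k : Fin M, (2 * lamNC k - (1/2) * rho k) * C k) /
        (∑ k : Fin M, lamC k * C k) := by
  have hden : (1/2) * (ybar ⬝ᵥ A *ᵥ ybar) = ∑ k, lamC k * C k := by
    rw [dotProduct_mulVec_eq_of_blockwise_eigen P (c := fun k => 2 * lamC k) hstatC, mul_sum]
    exact sum_congr rfl fun k _ => by rw [hbudgetC]; ring
  have hnum : ∑ k, (2 * lamNC k - (1/2) * rho k) * C k ≤ (1/2) * (ystar ⬝ᵥ A *ᵥ ystar) := by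
    simpa only [hbudgetNC] using sum_mul_le_half_dotProduct_mulVec_of_stationary P hstatNC hrho
  rw [ge_iff_le, ← hden]
  exact div_le_div_of_nonneg_right hnum hWbar.le

/-- L2 efficiency lower bound: with `W(y) = (1/2) yᵀ A y`, if the cooperative optimum `ȳ`
satisfies its KKT conditions with multipliers `λ̄_k` and the non-cooperative equilibrium
`y*` satisfies its KKT conditions with multipliers `λ*_k` (both spending the full budgets
`C_k`), and `W(ȳ) > 0`, then
`W(y*)/W(ȳ) ≥ (Σ_k (2λ*_k - ρ_k/2) C_k) / (Σ_k λ̄_k C_k)`. -/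
theorem stmt11 {N M : ℕ} (A : Matrix (Fin N) (Fin N) ℝ) (hsymm : A.IsSymm)
    (hA : A.PosDef) (P : Fin N → Fin M) (C lamNC lamC rho : Fin M → ℝ)
    (hC : ∀ k, 0 < C k) (hlamNC : ∀ k, 0 ≤ lamNC k) (hlamC : ∀ k, 0 ≤ lamC k)
    (ystar ybar : Fin N → ℝ)
    -- non-cooperative KKT stationarity for y*
    (hstatNC : ∀ i, (∑ j ∈ Finset.univ.filter (fun j => P j = P i), A i j * ystar j) +
        (1/2) * (∑ j ∈ Finset.univ.filter (fun j => P j ≠ P i), A i j * ystar j) =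
        2 * lamNC (P i) * ystar i)
    (hbudgetNC : ∀ k, (∑ i ∈ Finset.univ.filter (fun i => P i = k), (ystar i)^2) = C k)
    -- cooperative KKT stationarity for ȳ
    (hstatC : ∀ i, (A *ᵥ ybar) i = 2 * lamC (P i) * ybar i)
    (hbudgetC : ∀ k, (∑ i ∈ Finset.univ.filter (fun i => P i = k), (ybar i)^2) = C k)
    -- spectral radius bounds for diagonal blocks
    (hrho : ∀ k, ∀ z : Fin N → ℝ, (∀ i, P i ≠ k → z i = 0) →
        z ⬝ᵥ A *ᵥ z ≤ rho k * (z ⬝ᵥ z))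
    (hWbar : 0 < (1/2) * (ybar ⬝ᵥ A *ᵥ ybar)) :
    ((1/2) * (ystar ⬝ᵥ A *ᵥ ystar)) / ((1/2) * (ybar ⬝ᵥ A *ᵥ ybar)) ≥
      (∑ k : Fin M, (2 * lamNC k - (1/2) * rho k) * C k) /
        (∑ k : Fin M, lamC k * C k) :=
  stmt11_general A P C lamNC lamC rho ystar ybar hstatNC hbudgetNC hstatC hbudgetC hrho hWbar
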